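/- Let d2, a2, h, q > 0 and x2 > 0. If w is a solution of the downstream toxicant boundary value problem on [0, x2] and w(x) > 0 for all x ∈ [0, x2], then for every x ∈ (0, x2) one has 0 < w'(x) < (a2/d2)·w(x). -/

import Mathlib

open Set

/-- `w` is a solution of the downstream toxicant boundary value problem with
parameters `d2, a2, h, q` on the interval `[0, x2]`. -/
def IsDownstreamSolution (d2 a2 h q x2 : ℝ) (w : ℝ → ℝ) : Prop :=
  ContDiff ℝ 2 w ∧
  (∀ x ∈ Set.Icc (0 : ℝ) x2,
      d2 * deriv (deriv w) x - a2 * deriv w x + h - q * w x = 0) ∧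
  d2 * deriv w 0 - a2 * w 0 = 0 ∧ d2 * deriv w x2 - a2 * w x2 = 0

set_option maxHeartbeats 1000000 in
/-- for a positive solution of the downstream problem,
`0 < w' < (a2/d2) · w` on the open interval `(0, x2)`. -/
theorem downstream_deriv_bounds
    (d2 a2 h q x2 : ℝ) (w : ℝ → ℝ)
    (hd2 : 0 < d2) (ha2 : 0 < a2) (hh : 0 < h) (hq : 0 < q) (hx2 : 0 < x2)
    (hw : IsDownstreamSolution d2 a2 h q x2 w)
    (hpos : ∀ x ∈ Set.Icc (0 : ℝ) x2, 0 < w x) :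
    ∀ x ∈ Set.Ioo (0 : ℝ) x2, 0 < deriv w x ∧ deriv w x < a2 / d2 * w x := by
  obtain ⟨hC, hODE, hb0, hb2⟩ := hw
  -- basic differentiability
  have hbasic : Differentiable ℝ w ∧ ContDiff ℝ 1 (deriv w) := by
    have := (contDiff_succ_iff_deriv (n := 1)).mp (by exact_mod_cast hC)
    exact ⟨this.1, this.2.2⟩
  obtain ⟨hdw, hC1⟩ := hbasic
  have hcw : Continuous w := hdw.continuous
  have hdv : Differentiable ℝ (deriv w) := hC1.differentiable one_ne_zero
  have hcv : Continuous (deriv w) := hdv.continuous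
  have hcg : Continuous (deriv (deriv w)) := hC1.continuous_deriv le_rfl
  set v := deriv w with hvdef
  set g := deriv v with hgdef
  -- ODE rewritten
  have hode : ∀ x ∈ Icc (0:ℝ) x2, d2 * g x = a2 * v x + (q * w x - h) := by
    intro x hx; have := hODE x hx; linarith
  -- φ and its derivative
  set φ : ℝ → ℝ := fun x => d2 * v x - a2 * w x with hφdef
  have hφd : Differentiable ℝ φ := (hdv.const_mul d2).sub (hdw.const_mul a2)
  have hφderiv : ∀ x, deriv φ x = d2 * g x - a2 * v x := by
    intro x
    rw [hφdef]
    rw [deriv_fun_sub ((hdv x).const_mul d2) ((hdw x).const_mul a2),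
      deriv_const_mul d2 (hdv x), deriv_const_mul a2 (hdw x)]
  have hφIcc : ∀ x ∈ Icc (0:ℝ) x2, deriv φ x = q * w x - h := by
    intro x hx; rw [hφderiv x]; have := hode x hx; linarith
  have hφ0 : φ 0 = 0 := hb0
  have hφ2 : φ x2 = 0 := hb2
  -- Step A : φ < 0 on the interior
  have stepA : ∀ x ∈ Ioo (0:ℝ) x2, φ x < 0 := by
    by_contra hcon
    push_neg at hcon
    obtain ⟨x0, hx0, hx0'⟩ := hcon
    obtain ⟨c, hcmem, hcmax⟩ := isCompact_Icc.exists_isMaxOn (nonempty_Icc.mpr hx2.le)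
      hφd.continuous.continuousOn
    have key : ∃ c ∈ Ioo (0:ℝ) x2, IsMaxOn φ (Icc 0 x2) c ∧ 0 ≤ φ c := by
      by_cases hc : c ∈ Ioo (0:ℝ) x2
      · exact ⟨c, hc, hcmax, hx0'.trans (hcmax (Ioo_subset_Icc_self hx0))⟩
      · have hφc : φ c = 0 := by
          have h01 : c = 0 ∨ c = x2 := by
            by_contra hcc
            push_neg at hcc
            exact hc ⟨lt_of_le_of_ne hcmem.1 (Ne.symm hcc.1), lt_of_le_of_ne hcmem.2 hcc.2⟩
          rcases h01 with h | h
          · rw [h]; exact hφ0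
          · rw [h]; exact hφ2
        have hmax0 : IsMaxOn φ (Icc 0 x2) x0 := by
          intro y hy
          have := hcmax hy
          simp only [mem_setOf_eq] at this ⊢
          rw [hφc] at this
          linarith
        exact ⟨x0, hx0, hmax0, hx0'⟩
    obtain ⟨c, hcI, hmax, hc0⟩ := key
    have hcIcc : c ∈ Icc (0:ℝ) x2 := Ioo_subset_Icc_self hcI
    have hwc : q * w c = h := by
      have h1 : deriv φ c = 0 := (hmax.isLocalMax (Icc_mem_nhds hcI.1 hcI.2)).deriv_eq_zero
      have := hφIcc c hcIcc
      linarith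
    have hvc : 0 < v c := by
      have hwcpos := hpos c hcIcc
      have : 0 ≤ d2 * v c - a2 * w c := hc0
      nlinarith
    -- find a small ball on which v > 0, inside Ioo 0 x2
    have hopen : IsOpen ({x | 0 < v x} ∩ Ioo 0 x2) :=
      (isOpen_lt continuous_const hcv).inter isOpen_Ioo
    have hmemU : c ∈ ({x | 0 < v x} ∩ Ioo 0 x2) := ⟨hvc, hcI⟩
    obtain ⟨δ, hδpos, hball⟩ := Metric.isOpen_iff.mp hopen c hmemU
    set b := c + δ / 2 with hbdef
    have hbball : b ∈ Metric.ball c δ := by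
      simp only [Metric.mem_ball, hbdef, Real.dist_eq]
      rw [abs_of_nonneg (by linarith)]
      · linarith
    have hbI : b ∈ Ioo (0:ℝ) x2 := (hball hbball).2
    have hcb : c < b := by simp [hbdef]; linarith
    have hsub : Icc c b ⊆ Metric.ball c δ := by
      intro x hx
      simp only [Metric.mem_ball, Real.dist_eq]
      rw [abs_of_nonneg (by linarith [hx.1])]
      have := hx.2
      simp only [hbdef] at this
      linarith
    have hmono : StrictMonoOn w (Icc c b) := by
      apply strictMonoOn_of_deriv_pos (convex_Icc c b) hcw.continuousOn
      intro x hx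
      rw [interior_Icc] at hx
      exact (hball (hsub (Ioo_subset_Icc_self hx))).1
    have hφmono : StrictMonoOn φ (Icc c b) := by
      apply strictMonoOn_of_deriv_pos (convex_Icc c b) hφd.continuous.continuousOn
      intro x hx
      rw [interior_Icc] at hx
      have hxI : x ∈ Ioo (0:ℝ) x2 := (hball (hsub (Ioo_subset_Icc_self hx))).2
      rw [hφIcc x (Ioo_subset_Icc_self hxI)]
      have hwlt : w c < w x := hmono (left_mem_Icc.mpr hcb.le) (Ioo_subset_Icc_self hx) hx.1
      nlinarith
    have hlt : φ c < φ b := hφmono (left_mem_Icc.mpr hcb.le) (right_mem_Icc.mpr hcb.le) hcb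
    exact absurd (hmax (Ioo_subset_Icc_self hbI)) (not_le.mpr hlt)
  -- boundary positivity of v
  have hv0 : 0 < v 0 := by
    have := hpos 0 (left_mem_Icc.mpr hx2.le)
    nlinarith [hb0]
  have hv2 : 0 < v x2 := by
    have := hpos x2 (right_mem_Icc.mpr hx2.le)
    nlinarith [hb2]
  -- the companion function G equal to g on Icc
  set G : ℝ → ℝ := fun x => (a2 * v x + (q * w x - h)) / d2 with hGdef
  have hGdiff : Differentiable ℝ G :=
    (((hdv.const_mul a2).add ((hdw.const_mul q).sub_const h)).div_const d2)
  have hGderiv : ∀ x, deriv G x = (a2 * g x + q * v x) / d2 := by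
    intro x
    rw [hGdef]
    rw [deriv_div_const, deriv_fun_add ((hdv x).const_mul a2) (((hdw x).const_mul q).sub_const h),
      deriv_const_mul a2 (hdv x), deriv_sub_const, deriv_const_mul q (hdw x)]
  have hgG : ∀ x ∈ Icc (0:ℝ) x2, g x = G x := by
    intro x hx
    have := hode x hx
    rw [hGdef]
    field_simp
    linarith
  -- Step B : v > 0 on the interior
  have stepB : ∀ x ∈ Ioo (0:ℝ) x2, 0 < v x := by
    by_contra hcon
    push_neg at hcon
    obtain ⟨x0, hx0, hx0'⟩ := hcon
    obtain ⟨c, hcmem, hmin⟩ := isCompact_Icc.exists_isMinOn (nonempty_Icc.mpr hx2.le)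
      hcv.continuousOn
    have hvc : v c ≤ 0 := (hmin (Ioo_subset_Icc_self hx0)).trans hx0'
    have hcI : c ∈ Ioo (0:ℝ) x2 := by
      have hne0 : c ≠ 0 := by intro hc0; rw [hc0] at hvc; linarith
      have hne2 : c ≠ x2 := by intro hc2; rw [hc2] at hvc; linarith
      exact ⟨lt_of_le_of_ne hcmem.1 (Ne.symm hne0), lt_of_le_of_ne hcmem.2 hne2⟩
    have hcIcc : c ∈ Icc (0:ℝ) x2 := Ioo_subset_Icc_self hcI
    have hgc : g c = 0 := (hmin.isLocalMin (Icc_mem_nhds hcI.1 hcI.2)).deriv_eq_zero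
    have heq : a2 * v c + (q * w c - h) = 0 := by
      have := hode c hcIcc
      rw [hgc] at this
      linarith
    rcases lt_or_eq_of_le hvc with hvneg | hvzero
    · -- nondegenerate case : v c < 0
      have hdGc : deriv G c < 0 := by
        rw [hGderiv c, hgc]
        have : a2 * 0 + q * v c < 0 := by nlinarith
        apply div_neg_of_neg_of_pos _ hd2
        nlinarith
      have hcontdG : Continuous (deriv G) := by
        have : deriv G = fun x => (a2 * g x + q * v x) / d2 := funext hGderiv
        rw [this]
        exact (((continuous_const.mul hcg).add (continuous_const.mul hcv)).div_const d2)
      have hopen : IsOpen ({x | deriv G x < 0} ∩ Ioo 0 x2) :=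
        (isOpen_lt hcontdG continuous_const).inter isOpen_Ioo
      obtain ⟨δ, hδpos, hball⟩ := Metric.isOpen_iff.mp hopen c ⟨hdGc, hcI⟩
      set b := c - δ / 2 with hbdef
      have hsub : Icc b c ⊆ Metric.ball c δ := by
        intro x hx
        simp only [Metric.mem_ball, Real.dist_eq]
        rw [abs_of_nonpos (by linarith [hx.2])]
        have := hx.1
        simp only [hbdef] at this
        linarith
      have hbc : b < c := by simp [hbdef]; linarith
      have hGanti : StrictAntiOn G (Icc b c) := by
        apply strictAntiOn_of_deriv_neg (convex_Icc b c) hGdiff.continuous.continuousOn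
        intro x hx
        rw [interior_Icc] at hx
        exact (hball (hsub (Ioo_subset_Icc_self hx))).1
      have hvmono : StrictMonoOn v (Icc b c) := by
        apply strictMonoOn_of_deriv_pos (convex_Icc b c) hcv.continuousOn
        intro x hx
        rw [interior_Icc] at hx
        have hxI : x ∈ Ioo (0:ℝ) x2 := (hball (hsub (Ioo_subset_Icc_self hx))).2
        have h1 : g x = G x := hgG x (Ioo_subset_Icc_self hxI)
        have h2 : G c < G x := hGanti (Ioo_subset_Icc_self hx) (right_mem_Icc.mpr hbc.le) hx.2
        have h3 : G c = 0 := by rw [← hgG c hcIcc, hgc]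
        rw [← hgdef, h1]
        linarith
      have hblt : v b < v c := hvmono (left_mem_Icc.mpr hbc.le) (right_mem_Icc.mpr hbc.le) hbc
      have hbI : b ∈ Ioo (0:ℝ) x2 := (hball (hsub (left_mem_Icc.mpr hbc.le))).2
      exact absurd (hmin (Ioo_subset_Icc_self hbI)) (not_le.mpr hblt)
    · -- degenerate case : v c = 0 ; use Grönwall to show v ≡ 0 to the right of c
      have hvc0 : v c = 0 := hvzero
      set K : ℝ := 1 + (a2 + q) / d2 with hKdef
      have hKpos : 0 < K := by positivity
      have hzero : ∀ b ∈ Ioo c x2, v b = 0 := by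
        intro b hb
        have hIccsub : Icc c b ⊆ Icc (0:ℝ) x2 := by
          intro x hx
          exact ⟨hcI.1.le.trans hx.1, hx.2.trans hb.2.le⟩
        have hIoosub : Icc c b ⊆ Ioo (0:ℝ) x2 := by
          intro x hx
          exact ⟨lt_of_lt_of_le hcI.1 hx.1, lt_of_le_of_lt hx.2 hb.2⟩
        set F : ℝ → ℝ × ℝ := fun x => (v x, g x) with hFdef
        set F' : ℝ → ℝ × ℝ := fun x => (g x, (a2 * g x + q * v x) / d2) with hF'def
        have hFcont : Continuous F := hcv.prodMk hcg
        have hFderiv : ∀ x ∈ Ico c b, HasDerivWithinAt F (F' x) (Ici x) x := by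
          intro x hx
          have hxI : x ∈ Ioo (0:ℝ) x2 := hIoosub ⟨hx.1, hx.2.le⟩
          have h1 : HasDerivAt v (g x) x := (hdv x).hasDerivAt
          have hnhd : Icc (0:ℝ) x2 ∈ nhds x := Icc_mem_nhds hxI.1 hxI.2
          have heq2 : g =ᶠ[nhds x] G := by
            filter_upwards [hnhd] with y hy using hgG y hy
          have h2 : HasDerivAt g ((a2 * g x + q * v x) / d2) x := by
            have := (hGdiff x).hasDerivAt
            rw [hGderiv x] at this
            exact this.congr_of_eventuallyEq heq2
          exact (h1.prodMk h2).hasDerivWithinAt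
        have hFc : ‖F c‖ ≤ 0 := by
          have hFc0 : F c = ((0 : ℝ), (0 : ℝ)) := by
            rw [hFdef]
            simp only
            rw [hvc0, hgc]
          rw [hFc0]
          simp [Prod.norm_def]
        have hbound : ∀ x ∈ Ico c b, ‖F' x‖ ≤ K * ‖F x‖ + 0 := by
          intro x _
          rw [add_zero]
          have hnorm1 : ‖F' x‖ = max |g x| |(a2 * g x + q * v x) / d2| := by
            rw [hF'def]; rw [Prod.norm_def]; rfl
          have hnorm2 : ‖F x‖ = max |v x| |g x| := by
            rw [hFdef]; rw [Prod.norm_def]; rfl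
          rw [hnorm1, hnorm2]
          set M := max |v x| |g x| with hMdef
          have hM0 : 0 ≤ M := le_trans (abs_nonneg _) (le_max_left _ _)
          have hvM : |v x| ≤ M := le_max_left _ _
          have hgM : |g x| ≤ M := le_max_right _ _
          have hK1 : 1 ≤ K := by
            have : 0 ≤ (a2 + q) / d2 := div_nonneg (by linarith) hd2.le
            rw [hKdef]; linarith
          apply max_le
          · nlinarith
          · rw [abs_div, abs_of_pos hd2, div_le_iff₀ hd2]
            have habs : |a2 * g x + q * v x| ≤ a2 * |g x| + q * |v x| := by
              calc |a2 * g x + q * v x| ≤ |a2 * g x| + |q * v x| := abs_add_le _ _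
                _ = a2 * |g x| + q * |v x| := by
                    rw [abs_mul, abs_mul, abs_of_pos ha2, abs_of_pos hq]
            have : a2 * |g x| + q * |v x| ≤ (a2 + q) * M := by nlinarith
            have hKM : (a2 + q) * M ≤ K * M * d2 / d2 * d2 := by
              rw [div_mul_cancel₀ _ (ne_of_gt hd2)]
              rw [hKdef]
              have : (1 + (a2 + q) / d2) * M * d2 = M * d2 + (a2 + q) * M := by
                field_simp
              rw [this]
              nlinarith
            calc |a2 * g x + q * v x| ≤ (a2 + q) * M := habs.trans this
              _ ≤ K * M * d2 / d2 * d2 := hKM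
              _ = K * M * d2 := by rw [div_mul_cancel₀ _ (ne_of_gt hd2)]
        have := norm_le_gronwallBound_of_norm_deriv_right_le hFcont.continuousOn
          hFderiv hFc hbound b (right_mem_Icc.mpr hb.1.le)
        rw [gronwallBound_ε0_δ0] at this
        have hF0 : F b = 0 := norm_le_zero_iff.mp this
        have : v b = (F b).1 := rfl
        rw [this, hF0]
        rfl
      -- conclude v x2 = 0 by continuity, contradiction
      have hlim1 : Filter.Tendsto v (nhdsWithin x2 (Iio x2)) (nhds (v x2)) :=
        (hcv.continuousAt.continuousWithinAt).tendsto
      have hmemnhd : Ioo c x2 ∈ nhdsWithin x2 (Iio x2) :=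
        Ioo_mem_nhdsLT_of_mem ⟨hcI.2, le_refl x2⟩
      have hlim2 : Filter.Tendsto v (nhdsWithin x2 (Iio x2)) (nhds 0) := by
        apply Filter.Tendsto.congr' _ tendsto_const_nhds
        filter_upwards [hmemnhd] with y hy
        exact (hzero y hy).symm
      have : v x2 = 0 := tendsto_nhds_unique hlim1 hlim2
      linarith
  -- final assembly
  intro x hx
  refine ⟨stepB x hx, ?_⟩
  have hφx : φ x < 0 := stepA x hx
  have : d2 * v x - a2 * w x < 0 := hφx
  rw [div_mul_eq_mul_div, lt_div_iff₀ hd2]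
  linarith
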